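/- Every word over the alphabet {1,...,n} containing every permutation of length n as a (not necessarily contiguous) subsequence has length at least n(n+1)/2. -/
import Mathlib

/-- `w` is a permutation of length `n`: a word on `{1,...,n}` with each letter occurring once. -/
def IsPermWord (n : Nat) (w : List Nat) : Prop :=
  w.length = n ∧ w.Nodup ∧ ∀ x ∈ w, 1 ≤ x ∧ x ≤ n

private lemma aux : ∀ (n : ℕ) (A : Finset ℕ) (w : List ℕ), A.card = n →
    (∀ p : List ℕ, p.Nodup → (∀ x ∈ p, x ∈ A) → p.length = n → p.Sublist w) →
    n * (n + 1) / 2 ≤ w.length := by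
  intro n
  induction n with
  | zero => intro A w _ _; simp
  | succ m ih =>
    intro A w hA h
    -- every element of A occurs in w
    have hAll : ∀ x ∈ A, x ∈ w := by
      intro x hx
      have hsub := h A.toList A.nodup_toList (fun y hy => Finset.mem_toList.mp hy)
        (by rw [Finset.length_toList, hA])
      exact hsub.subset (Finset.mem_toList.mpr hx)
    classical
    have hex : ∃ k, ∀ x ∈ A, x ∈ w.take k := by
      refine ⟨w.length, fun x hx => ?_⟩
      rw [List.take_length]; exact hAll x hx
    set k := Nat.find hex with hkdef
    have hk : ∀ x ∈ A, x ∈ w.take k := Nat.find_spec hex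
    have hkle : k ≤ w.length := Nat.find_min' hex (by
      intro x hx; rw [List.take_length]; exact hAll x hx)
    have hAne : A.Nonempty := Finset.card_pos.mp (by omega)
    have hk0 : 0 < k := by
      rcases hAne with ⟨x, hx⟩
      rcases Nat.eq_zero_or_pos k with h0 | h0
      · exfalso; have := hk x hx; rw [h0] at this; simp at this
      · exact h0
    have hnot : ¬ ∀ x ∈ A, x ∈ w.take (k - 1) := Nat.find_min hex (by omega)
    push_neg at hnot
    obtain ⟨b, hbA, hbnot⟩ := hnot
    -- k ≥ m + 1
    have hkge : m + 1 ≤ k := by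
      have hsubA : A ⊆ (w.take k).toFinset := by
        intro x hx; exact List.mem_toFinset.mpr (hk x hx)
      have h1 : A.card ≤ (w.take k).toFinset.card := Finset.card_le_card hsubA
      have h2 : (w.take k).toFinset.card ≤ (w.take k).length := List.toFinset_card_le _
      have h3 : (w.take k).length ≤ k := by simp
      omega
    -- apply IH to A.erase b and w.drop k
    have hih : m * (m + 1) / 2 ≤ (w.drop k).length := by
      apply ih (A.erase b) (w.drop k) (by rw [Finset.card_erase_of_mem hbA, hA]; omega)
      intro p hnd hmem hlen
      have hbp : b ∉ p := fun hmemb => (Finset.ne_of_mem_erase (hmem b hmemb)) rfl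
      have hcons : (b :: p).Sublist w := by
        apply h (b :: p) (List.nodup_cons.mpr ⟨hbp, hnd⟩)
        · intro x hx
          rcases List.mem_cons.mp hx with rfl | hx
          · exact hbA
          · exact Finset.mem_of_mem_erase (hmem x hx)
        · simp [hlen]
      obtain ⟨r₁, r₂, hw, hbr, hq⟩ := List.cons_sublist_iff.mp hcons
      have hr1 : r₁ = w.take r₁.length := by rw [hw, List.take_left]
      have hsle : k ≤ r₁.length := by
        by_contra hc
        push_neg at hc
        apply hbnot
        have heq : w.take r₁.length = (w.take (k - 1)).take r₁.length := by
          rw [List.take_take, Nat.min_eq_left (by omega)]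
        rw [hr1, heq] at hbr
        exact List.take_subset _ _ hbr
      have hr2 : r₂ = (w.drop k).drop (r₁.length - k) := by
        rw [List.drop_drop]
        have h1 : k + (r₁.length - k) = r₁.length := by omega
        rw [h1, hw, List.drop_left]
      rw [hr2] at hq
      exact hq.trans (List.drop_sublist _ _)
    have hdlen : (w.drop k).length = w.length - k := by simp
    have h2 : (m + 1) * (m + 1 + 1) = 2 * (m + 1) + m * (m + 1) := by ring
    have h3 : m * (m + 1) % 2 = 0 := Nat.even_iff.mp (Nat.even_mul_succ_self m)
    omega

theorem subsequence_universal_word_lower_bound (n : Nat) (w : List Nat)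
    (halpha : ∀ x ∈ w, 1 ≤ x ∧ x ≤ n)
    (huniv : ∀ p : List Nat, IsPermWord n p → List.Sublist p w) :
    n * (n + 1) / 2 ≤ w.length := by
  apply aux n (Finset.Icc 1 n) w (by simp)
  intro p hnd hmem hlen
  apply huniv
  refine ⟨hlen, hnd, fun x hx => ?_⟩
  have := hmem x hx
  rw [Finset.mem_Icc] at this
  exact this
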